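/- If X ∈ A^ω is not μ-normal, then there exists a μ-gambler 𝒢 with limsup_{n→∞} capital(𝒢, X[0..n]) = +∞; moreover 𝒢 wins at an infinitely-often exponential rate: limsup_n (log capital(𝒢, X[0..n]))/n > 0. -/

import Mathlib

open Filter Topology

/-- The prefix `X(0) X(1) ⋯ X(n-1)` of an infinite sequence, as a list. -/
def pref {A : Type*} (X : ℕ → A) (n : ℕ) : List A := (List.range n).map X

/-- Number of occurrences of the word `w` in the prefix `X[0..n]`
(indices `i` with `0 ≤ i ≤ n - |w| + 1`). -/
def nbocc {A : Type*} [DecidableEq A] (w : List A) (X : ℕ → A) (n : ℕ) : ℕ :=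
  ((Finset.range (n + 2 - w.length)).filter
    (fun i => (List.range w.length).map (fun j => X (i + j)) = w)).card

/-- Frequency of occurrences of `w` in `X[0..n]`. -/
noncomputable def freq {A : Type*} [DecidableEq A] (w : List A) (X : ℕ → A) (n : ℕ) : ℝ :=
  (nbocc w X n : ℝ) / ((n + 2 - w.length : ℕ) : ℝ)

/-- The Bernoulli measure of a word: product of the measures of its letters. -/
def wmeas {A : Type*} (μ : A → ℝ) (w : List A) : ℝ := (w.map μ).prod

/-- `X` is `μ`-normal: every nonempty word occurs with asymptotic frequency `μ(w)`. -/
def BNormal {A : Type*} [DecidableEq A] (μ : A → ℝ) (X : ℕ → A) : Prop :=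
  ∀ w : List A, w ≠ [] → Tendsto (fun n => freq w X n) atTop (𝓝 (wmeas μ w))

/-- Iterated transition function of a deterministic automaton. -/
def dstar {Q A : Type*} (δ : Q → A → Q) (q : Q) (w : List A) : Q := w.foldl δ q

/-- Capital of an automatic gambler started in state `q` after reading `w`. -/
def capital {Q A : Type*} (δ : Q → A → Q) (γ : Q → A → ℝ) : Q → List A → ℝ
  | _, [] => 1
  | q, a :: w => γ q a * capital δ γ (δ q a) w

/-!
Take a shortest word `u ++ [a]` whose frequency in `X` does not tend to `μ(u) μ(a)`. The
frequency of `u` does tend to `μ(u)`, so the number `M` of occurrences of `u ++ [a]` differs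
from `μ(a)` times the number `C` of occurrences of `u` by at least `ε n`, infinitely often.
A gambler remembering the last `|u|` letters, which after seeing `u` stakes a fraction `s` of
its capital on (or, for `s < 0`, against) the letter `a`, gains at least
`s (M - μ(a) C) - 2 s² C` in log-capital since `log (1 + x) ≥ x - 2 x²` for `|x| ≤ 1/2`.
Choosing the sign of `s` and `|s|` small turns this into a gain linear in `n`.
-/

open Finset Real

section Words

variable {A : Type*}

def window (X : ℕ → A) (i k : ℕ) : List A := pref (fun j => X (i + j)) k

theorem pref_add (X : ℕ → A) (m n : ℕ) : pref X (m + n) = pref X m ++ window X m n := by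
  simp [pref, window, List.range_add]

theorem pref_succ (X : ℕ → A) (n : ℕ) : pref X (n + 1) = pref X n ++ [X n] := by
  simp [pref, List.range_succ]

theorem length_pref (X : ℕ → A) (n : ℕ) : (pref X n).length = n := by
  simp [pref]

theorem window_succ (X : ℕ → A) (i k : ℕ) : window X i (k + 1) = window X i k ++ [X (i + k)] :=
  pref_succ _ k

theorem window_eq_concat_iff (X : ℕ → A) (i : ℕ) (u : List A) (a : A) :
    window X i (u.length + 1) = u ++ [a] ↔ window X i u.length = u ∧ X (i + u.length) = a := by
  rw [window_succ]
  constructor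
  · intro h
    obtain ⟨hu, ha⟩ := List.append_inj' h rfl
    exact ⟨hu, List.singleton_inj.1 ha⟩
  · rintro ⟨hu, rfl⟩
    rw [hu]

theorem rtake_pref_add (X : ℕ → A) (i k : ℕ) : (pref X (i + k)).rtake k = window X i k := by
  rw [pref_add, List.rtake, List.length_append, length_pref, window, length_pref,
    Nat.add_sub_cancel, List.drop_left' (length_pref X i)]

theorem rtake_rtake_append (l v : List A) (K : ℕ) :
    (l.rtake K ++ v).rtake K = (l ++ v).rtake K := by
  simp [List.rtake_eq_reverse_take_reverse, List.take_append, List.take_take]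

theorem wmeas_concat (μ : A → ℝ) (u : List A) (a : A) :
    wmeas μ (u ++ [a]) = wmeas μ u * μ a := by
  simp [wmeas]

variable [DecidableEq A]

def occCount (w : List A) (X : ℕ → A) (J : ℕ) : ℕ :=
  #{i ∈ range J | window X i w.length = w}

theorem nbocc_eq_occCount (w : List A) (X : ℕ → A) (n : ℕ) :
    nbocc w X n = occCount w X (n + 2 - w.length) := rfl

theorem occCount_le (w : List A) (X : ℕ → A) (J : ℕ) : occCount w X J ≤ J :=
  (card_filter_le _ _).trans (card_range J).le

theorem occCount_nil (X : ℕ → A) (J : ℕ) : occCount [] X J = J := by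
  simp [occCount, window, pref]

theorem tendsto_freq_iff (w : List A) (X : ℕ → A) (ρ : ℝ) :
    Tendsto (freq w X) atTop (𝓝 ρ) ↔
      Tendsto (fun J => (occCount w X J : ℝ) / J) atTop (𝓝 ρ) := by
  have h : (fun n => freq w X (n + w.length)) =
      fun n => (occCount w X (n + 2) : ℝ) / (n + 2 : ℕ) := by
    funext n
    rw [freq, nbocc_eq_occCount, show n + w.length + 2 - w.length = n + 2 by omega]
  rw [← tendsto_add_atTop_iff_nat w.length, h]
  exact tendsto_add_atTop_iff_nat (f := fun J => (occCount w X J : ℝ) / J) 2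

theorem tendsto_occCount_nil_div (X : ℕ → A) :
    Tendsto (fun J => (occCount [] X J : ℝ) / J) atTop (𝓝 1) := by
  refine tendsto_const_nhds.congr' ?_
  filter_upwards [eventually_ne_atTop 0] with J hJ
  rw [occCount_nil, div_self (Nat.cast_ne_zero.2 hJ)]

theorem exists_concat_not_tendsto {μ : A → ℝ} {X : ℕ → A} (hX : ¬ BNormal μ X) :
    ∃ (u : List A) (a : A),
      Tendsto (fun J => (occCount u X J : ℝ) / J) atTop (𝓝 (wmeas μ u)) ∧
      ¬ Tendsto (fun J => (occCount (u ++ [a]) X J : ℝ) / J) atTop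
        (𝓝 (wmeas μ (u ++ [a]))) := by
  by_contra! h
  suffices ∀ w, Tendsto (fun J => (occCount w X J : ℝ) / J) atTop (𝓝 (wmeas μ w)) from
    hX fun w _ => (tendsto_freq_iff w X _).2 (this w)
  intro w
  induction w using List.reverseRecOn with
  | nil => simpa [wmeas] using tendsto_occCount_nil_div X
  | append_singleton u a ih => exact h u a ih

end Words

theorem exists_frequently_le_abs_sub {x y : ℕ → ℝ} {P θ : ℝ}
    (hy : Tendsto (fun n => y n / n) atTop (𝓝 P))
    (hx : ¬ Tendsto (fun n => x n / n) atTop (𝓝 (P * θ))) :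
    ∃ ε > 0, ∃ᶠ n in atTop, ε * n ≤ |x n - θ * y n| := by
  have hnot : ¬ Tendsto (fun n => (x n - θ * y n) / n) atTop (𝓝 0) := by
    intro h
    apply hx
    convert h.add (hy.const_mul θ) using 1
    · funext n
      ring
    · rw [zero_add, mul_comm]
  rw [Metric.tendsto_atTop] at hnot
  push Not at hnot
  obtain ⟨ε, hε, h⟩ := hnot
  refine ⟨ε, hε, frequently_atTop.2 fun N => ?_⟩
  obtain ⟨n, hn, hdist⟩ := h N
  refine ⟨n, hn, ?_⟩
  rw [Real.dist_eq, sub_zero, abs_div, Nat.abs_cast] at hdist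
  rcases Nat.eq_zero_or_pos n with rfl | hpos
  · simp only [Nat.cast_zero, div_zero] at hdist
    linarith
  · exact (le_div_iff₀ (by positivity)).1 hdist

theorem exists_frequently_bet_gain {M C : ℕ → ℝ} {θ ε : ℝ} (hε : 0 < ε)
    (hC : ∀ n, C n ≤ n)
    (h : ∃ᶠ n in atTop, ε * n ≤ |M n - θ * C n|) :
    ∃ s : ℝ, |s| ≤ 1 / 2 ∧ ∃ κ > 0, ∃ᶠ n in atTop,
      κ * n ≤ s * (M n - θ * C n) - 2 * s ^ 2 * C n := by
  obtain ⟨σ, hσ, hσdev⟩ : ∃ σ : ℝ, |σ| = 1 ∧ ∃ᶠ n in atTop, ε * n ≤ σ * (M n - θ * C n) := by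
    rcases frequently_or_distrib.1 (h.mono fun n hn => le_abs.1 hn) with h | h
    · exact ⟨1, abs_one, h.mono fun n hn => by linarith⟩
    · exact ⟨-1, by simp, h.mono fun n hn => by linarith⟩
  -- With `s = σ t` the gain is at least `t ε n - 2 t² n ≥ t ε n / 2`.
  set t := min (ε / 4) (1 / 2)
  have ht : 0 < t := lt_min (by positivity) (by norm_num)
  have htε : t ≤ ε / 4 := min_le_left _ _
  refine ⟨σ * t, ?_, t * ε / 2, by positivity, hσdev.mono fun n hn => ?_⟩
  · rw [abs_mul, hσ, one_mul, abs_of_pos ht]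
    exact min_le_right _ _
  have hs : (σ * t) ^ 2 = t ^ 2 := by rw [mul_pow, ← sq_abs σ, hσ, one_pow, one_mul]
  rw [hs]
  have hgain := mul_le_mul_of_nonneg_left hn ht.le
  have hloss := mul_le_mul_of_nonneg_left (hC n) (by positivity : (0 : ℝ) ≤ 2 * t ^ 2)
  have hsmall := mul_le_mul_of_nonneg_right (mul_le_mul_of_nonneg_left htε ht.le)
    (Nat.cast_nonneg n : (0 : ℝ) ≤ n)
  linarith

theorem sub_two_mul_sq_le_log_one_add {x : ℝ} (hx : |x| ≤ 1 / 2) :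
    x - 2 * x ^ 2 ≤ log (1 + x) := by
  obtain ⟨hx₁, hx₂⟩ := abs_le.1 hx
  have hpos : 0 < 1 + x := by linarith
  have hinv : (1 + x)⁻¹ ≤ 1 - x + 2 * x ^ 2 := by
    rw [inv_le_iff_one_le_mul₀' hpos]
    nlinarith [mul_nonneg (sq_nonneg x) (by linarith : (0 : ℝ) ≤ 1 + 2 * x)]
  linarith [one_sub_inv_le_log_of_pos hpos]

section Automaton

variable {Q A : Type*}

theorem dstar_append_singleton (δ : Q → A → Q) (q : Q) (w : List A) (a : A) :
    dstar δ q (w ++ [a]) = δ (dstar δ q w) a := by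
  simp [dstar]

theorem capital_append_singleton (δ : Q → A → Q) (γ : Q → A → ℝ) (q : Q) (w : List A) (a : A) :
    capital δ γ q (w ++ [a]) = capital δ γ q w * γ (dstar δ q w) a := by
  induction w generalizing q with
  | nil => simp [capital, dstar]
  | cons b w ih =>
    rw [List.cons_append, capital, capital, ih, mul_assoc]
    rfl

theorem capital_pref (δ : Q → A → Q) (γ : Q → A → ℝ) (q : Q) (X : ℕ → A) (N : ℕ) :
    capital δ γ q (pref X N) = ∏ i ∈ range N, γ (dstar δ q (pref X i)) (X i) := by
  induction N with
  | zero => rfl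
  | succ N ih => rw [pref_succ, capital_append_singleton, ih, prod_range_succ]

theorem capital_pos {δ : Q → A → Q} {γ : Q → A → ℝ} (hγ : ∀ q a, 0 < γ q a) (q : Q)
    (w : List A) : 0 < capital δ γ q w := by
  induction w generalizing q with
  | nil => exact one_pos
  | cons a w ih => exact mul_pos (hγ q a) (ih _)

theorem capital_equiv {Q' : Type*} (e : Q ≃ Q') (δ : Q → A → Q) (γ : Q → A → ℝ) (q : Q)
    (w : List A) :
    capital (fun q' a => e (δ (e.symm q') a)) (fun q' a => γ (e.symm q') a) (e q) w
      = capital δ γ q w := by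
  induction w generalizing q with
  | nil => rfl
  | cons a w ih => simp only [capital, Equiv.symm_apply_apply, ih]

end Automaton

section Window

variable {A : Type*}

def slide (K : ℕ) (l : {l : List A // l.length ≤ K}) (a : A) : {l : List A // l.length ≤ K} :=
  ⟨(l.1 ++ [a]).rtake K, by simp only [List.rtake, List.length_drop]; omega⟩

instance [Finite A] (K : ℕ) : Finite {l : List A // l.length ≤ K} :=
  (List.finite_length_le A K).to_subtype

theorem dstar_slide (K : ℕ) (v : List A) :
    (dstar (slide K) ⟨[], K.zero_le⟩ v).1 = v.rtake K := by
  induction v using List.reverseRecOn with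
  | nil => simp [dstar]
  | append_singleton v a ih =>
    rw [dstar_append_singleton, ← rtake_rtake_append v [a] K, ← ih]
    rfl

end Window

section Betting

variable {A : Type*} [DecidableEq A]

/-- The payoff of staking the fraction `s` of the capital on the next letter being `a₀`
(against it when `s < 0`). -/
def betFactor (μ : A → ℝ) (s : ℝ) (a₀ a : A) : ℝ :=
  1 + s * ((if a = a₀ then 1 else 0) - μ a₀)

theorem sum_mul_betFactor [Fintype A] {μ : A → ℝ} (hμ : ∑ a, μ a = 1) (s : ℝ) (a₀ : A) :
    ∑ a, μ a * betFactor μ s a₀ a = 1 := by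
  simp only [betFactor, mul_add, mul_one, sum_add_distrib, hμ, mul_sub, mul_ite, mul_zero,
    sum_sub_distrib, sum_ite_eq', mem_univ, if_true]
  rw [← sum_mul, hμ]
  ring

theorem abs_betFactor_sub_one_le {μ : A → ℝ} {a₀ : A} (h₀ : 0 ≤ μ a₀) (h₁ : μ a₀ ≤ 1)
    (s : ℝ) (a : A) : |betFactor μ s a₀ a - 1| ≤ |s| := by
  rw [betFactor, add_sub_cancel_left, abs_mul]
  refine mul_le_of_le_one_right (abs_nonneg s) (abs_le.2 ⟨?_, ?_⟩) <;> split_ifs <;> linarith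

theorem betFactor_pos {μ : A → ℝ} {a₀ : A} (h₀ : 0 ≤ μ a₀) (h₁ : μ a₀ ≤ 1) {s : ℝ}
    (hs : |s| < 1) (a : A) : 0 < betFactor μ s a₀ a := by
  have := (abs_lt.1 ((abs_betFactor_sub_one_le h₀ h₁ s a).trans_lt hs)).1
  linarith

theorem sub_le_log_betFactor {μ : A → ℝ} {a₀ : A} (h₀ : 0 ≤ μ a₀) (h₁ : μ a₀ ≤ 1) {s : ℝ}
    (hs : |s| ≤ 1 / 2) (a : A) :
    s * ((if a = a₀ then 1 else 0) - μ a₀) - 2 * s ^ 2 ≤ log (betFactor μ s a₀ a) := by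
  have hx := abs_betFactor_sub_one_le h₀ h₁ s a
  have hsq : (betFactor μ s a₀ a - 1) ^ 2 ≤ s ^ 2 := sq_le_sq.2 hx
  have := sub_two_mul_sq_le_log_one_add (hx.trans hs)
  rw [add_sub_cancel] at this
  rw [betFactor] at hsq this ⊢
  linarith

def patternBet (μ : A → ℝ) (s : ℝ) (u : List A) (a₀ : A)
    (l : {l : List A // l.length ≤ u.length}) (a : A) : ℝ :=
  if l.1 = u then betFactor μ s a₀ a else 1

theorem patternBet_pos {μ : A → ℝ} {a₀ : A} (h₀ : 0 ≤ μ a₀) (h₁ : μ a₀ ≤ 1) {s : ℝ}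
    (hs : |s| < 1) (u : List A) (l : {l : List A // l.length ≤ u.length}) (a : A) :
    0 < patternBet μ s u a₀ l a := by
  unfold patternBet
  split_ifs
  exacts [betFactor_pos h₀ h₁ hs a, one_pos]

theorem sum_mul_patternBet [Fintype A] {μ : A → ℝ} (hμ : ∑ a, μ a = 1) (s : ℝ) (u : List A)
    (a₀ : A) (l : {l : List A // l.length ≤ u.length}) :
    ∑ a, μ a * patternBet μ s u a₀ l a = 1 := by
  unfold patternBet
  split_ifs
  exacts [sum_mul_betFactor hμ s a₀, by simpa using hμ]

end Betting

section PatternGambler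

variable {A : Type*} [DecidableEq A] {μ : A → ℝ} {u : List A} {a₀ : A}

theorem le_log_patternBet_window (h₀ : 0 ≤ μ a₀) (h₁ : μ a₀ ≤ 1) {s : ℝ} (hs : |s| ≤ 1 / 2)
    (X : ℕ → A) (j : ℕ) :
    s * ((if window X j (u.length + 1) = u ++ [a₀] then 1 else 0)
        - μ a₀ * (if window X j u.length = u then 1 else 0))
        - 2 * s ^ 2 * (if window X j u.length = u then 1 else 0) ≤
      log (patternBet μ s u a₀ (dstar (slide u.length) ⟨[], u.length.zero_le⟩
        (pref X (u.length + j))) (X (u.length + j))) := by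
  simp only [window_eq_concat_iff]
  rw [patternBet, dstar_slide, add_comm u.length j, rtake_pref_add]
  by_cases hw : window X j u.length = u
  · simpa [hw] using sub_le_log_betFactor h₀ h₁ hs (X (j + u.length))
  · simp [hw]

theorem log_capital_patternBet_ge (h₀ : 0 ≤ μ a₀) (h₁ : μ a₀ ≤ 1) {s : ℝ} (hs : |s| ≤ 1 / 2)
    (X : ℕ → A) (J : ℕ) :
    s * (occCount (u ++ [a₀]) X J - μ a₀ * occCount u X J) - 2 * s ^ 2 * occCount u X J ≤
      log (capital (slide u.length) (patternBet μ s u a₀) ⟨[], u.length.zero_le⟩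
        (pref X (u.length + J))) := by
  have hidle : ∀ i ∈ range u.length,
      patternBet μ s u a₀ (dstar (slide u.length) ⟨[], u.length.zero_le⟩ (pref X i)) (X i) = 1 :=
    fun i hi => if_neg fun h => by
      have hlen := congrArg List.length ((dstar_slide u.length (pref X i)).symm.trans h)
      simp only [List.rtake, List.length_drop, length_pref] at hlen
      simp only [mem_range] at hi
      omega
  have hpos := patternBet_pos h₀ h₁ (hs.trans_lt (by norm_num)) u
  rw [capital_pref, prod_range_add, prod_eq_one hidle, one_mul,
    log_prod fun j _ => (hpos _ _).ne']
  refine Eq.trans_le ?_ (sum_le_sum fun j _ => le_log_patternBet_window h₀ h₁ hs X j)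
  simp only [sum_sub_distrib, ← mul_sum, sum_boole, occCount, List.length_append,
    List.length_singleton]

theorem frequently_le_log_capital_patternBet (h₀ : 0 ≤ μ a₀) (h₁ : μ a₀ ≤ 1) {s κ : ℝ}
    (hs : |s| ≤ 1 / 2) (hκ : 0 < κ) {X : ℕ → A}
    (hgain : ∃ᶠ J in atTop, κ * J ≤ s * (occCount (u ++ [a₀]) X J - μ a₀ * occCount u X J)
      - 2 * s ^ 2 * occCount u X J) :
    ∃ᶠ N in atTop, κ / 2 * N ≤
      log (capital (slide u.length) (patternBet μ s u a₀) ⟨[], u.length.zero_le⟩ (pref X N)) := by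
  refine (tendsto_add_atTop_nat u.length).frequently
    ((hgain.and_eventually (eventually_ge_atTop u.length)).mono fun J ⟨hJ, hJK⟩ => ?_)
  have hcap := log_capital_patternBet_ge (u := u) h₀ h₁ hs X J
  have hKJ : κ * u.length ≤ κ * J := mul_le_mul_of_nonneg_left (by exact_mod_cast hJK) hκ.le
  rw [add_comm J, Nat.cast_add]
  linarith

end PatternGambler

theorem limsup_coe_eq_top_of_frequently_le_log {f : ℕ → ℝ} {c : ℝ} (hf : ∀ n, 0 < f n)
    (hc : 0 < c) (h : ∃ᶠ n in atTop, c * n ≤ log (f n)) :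
    limsup (fun n => (f n : EReal)) atTop = ⊤ := by
  refine (EReal.eq_top_iff_forall_lt _).2 fun r => ?_
  have hlarge : ∀ᶠ n : ℕ in atTop, r + 1 ≤ c * n :=
    (tendsto_natCast_atTop_atTop.const_mul_atTop hc).eventually_ge_atTop _
  refine (EReal.coe_lt_coe_iff.2 (lt_add_one r)).trans_le
    (le_limsup_of_frequently_le' ((h.and_eventually hlarge).mono fun n hn => ?_))
  have := add_one_le_exp (log (f n))
  rw [exp_log (hf n)] at this
  exact EReal.coe_le_coe_iff.2 (by linarith [hn.1, hn.2])

theorem limsup_div_pos_of_frequently_le {g : ℕ → ℝ} {c : ℝ} (hc : 0 < c)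
    (h : ∃ᶠ n in atTop, c * n ≤ g n) : 0 < limsup (fun n => ((g n / n : ℝ) : EReal)) atTop :=
  (EReal.coe_pos.2 hc).trans_le (le_limsup_of_frequently_le'
    ((h.and_eventually (eventually_gt_atTop 0)).mono fun n hn =>
      EReal.coe_le_coe_iff.2 ((le_div_iff₀ (by exact_mod_cast hn.2)).2 hn.1)))

theorem exists_fin_gambler_of_frequently_le_log_capital {Q A : Type*} [Finite Q] [Fintype A]
    (μ : A → ℝ) (δ : Q → A → Q) (γ : Q → A → ℝ) (q₀ : Q) (hγ : ∀ q a, 0 < γ q a)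
    (hfair : ∀ q, ∑ a, μ a * γ q a = 1) (X : ℕ → A) {c : ℝ} (hc : 0 < c)
    (h : ∃ᶠ n in atTop, c * n ≤ log (capital δ γ q₀ (pref X n))) :
    ∃ (m : ℕ) (δ : Fin m → A → Fin m) (qI : Fin m) (γ : Fin m → A → ℝ),
      (∀ q a, 0 ≤ γ q a) ∧ (∀ q, ∑ a, μ a * γ q a = 1) ∧
      Filter.limsup (fun n => ((capital δ γ qI (pref X n) : ℝ) : EReal)) atTop = ⊤ ∧
      0 < Filter.limsup
            (fun n => ((Real.log (capital δ γ qI (pref X n)) / n : ℝ) : EReal)) atTop := by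
  obtain ⟨m, ⟨e⟩⟩ := Finite.exists_equiv_fin Q
  refine ⟨m, fun q a => e (δ (e.symm q) a), e q₀, fun q a => γ (e.symm q) a,
    fun q a => (hγ _ a).le, fun q => hfair _, ?_, ?_⟩ <;> simp only [capital_equiv]
  · exact limsup_coe_eq_top_of_frequently_le_log (fun n => capital_pos hγ q₀ _) hc h
  · exact limsup_div_pos_of_frequently_le hc h

/-- if `X` is not `μ`-normal, then some `μ`-gambler wins against `X`,
and it wins at an infinitely-often exponential rate. -/
theorem non_normal_implies_winning_gambler
    {A : Type*} [Fintype A] [DecidableEq A]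
    (μ : A → ℝ) (hμpos : ∀ a, 0 < μ a) (hμsum : ∑ a, μ a = 1)
    (X : ℕ → A) (hX : ¬ BNormal μ X) :
    ∃ (m : ℕ) (δ : Fin m → A → Fin m) (qI : Fin m) (γ : Fin m → A → ℝ),
      (∀ q a, 0 ≤ γ q a) ∧ (∀ q, ∑ a, μ a * γ q a = 1) ∧
      Filter.limsup (fun n => ((capital δ γ qI (pref X n) : ℝ) : EReal)) atTop = ⊤ ∧
      0 < Filter.limsup
            (fun n => ((Real.log (capital δ γ qI (pref X n)) / n : ℝ) : EReal)) atTop := by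
  obtain ⟨u, a, hu, hua⟩ := exists_concat_not_tendsto hX
  have h₀ : 0 ≤ μ a := (hμpos a).le
  have h₁ : μ a ≤ 1 := hμsum ▸ single_le_sum (fun b _ => (hμpos b).le) (mem_univ a)
  rw [wmeas_concat] at hua
  obtain ⟨ε, hε, hdev⟩ := exists_frequently_le_abs_sub hu hua
  obtain ⟨s, hs, κ, hκ, hgain⟩ :=
    exists_frequently_bet_gain hε (fun J => by exact_mod_cast occCount_le u X J) hdev
  exact exists_fin_gambler_of_frequently_le_log_capital μ (slide u.length) (patternBet μ s u a)
    ⟨[], u.length.zero_le⟩ (patternBet_pos h₀ h₁ (hs.trans_lt (by norm_num)) u)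
    (sum_mul_patternBet hμsum s u a) X (half_pos hκ)
    (frequently_le_log_capital_patternBet h₀ h₁ hs hκ hgain)
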